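/- arXiv:1804.02995 — 3 statements merged into one kernel-verified Lean document; each statement's English description precedes it below -/
import Mathlib

section
/- Let X be a proper geodesic metric space, Γ a uniform lattice in Isom(X), and C a compact subset of X. Then there is a constant n = n(Γ,C) > 0 such that |{γ ∈ Γ : γg₁C ∩ g₂C ≠ ∅}| ≤ n for every pair of elements g₁, g₂ ∈ Isom(X). -/
open MeasureTheory Metric Set Filter

noncomputable section

variable {X : Type*}

/-- The Gromov product of `x` and `y` with respect to the basepoint `o`. -/
def gromovProd [MetricSpace X] (o x y : X) : ℝ :=
  (dist x o + dist y o - dist x y) / 2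

/-- A metric space is Gromov hyperbolic if it satisfies the four-point condition. -/
def IsGromovHyperbolic (X : Type*) [MetricSpace X] : Prop :=
  ∃ δ : ℝ, 0 ≤ δ ∧ ∀ o x y z : X,
    min (gromovProd o x y) (gromovProd o y z) - δ ≤ gromovProd o x z

/-- `f` is a unit speed geodesic from `x` to `y`, parametrized on `[0, dist x y]`. -/
def IsGeodesicFromTo {Y : Type*} [MetricSpace Y] (f : ℝ → Y) (x y : Y) : Prop :=
  f 0 = x ∧ f (dist x y) = y ∧
    ∀ s ∈ Icc (0 : ℝ) (dist x y), ∀ t ∈ Icc (0 : ℝ) (dist x y), dist (f s) (f t) = |s - t|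

/-- A geodesic metric space: any two points are joined by a geodesic. -/
def IsGeodesicSpace (X : Type*) [MetricSpace X] : Prop :=
  ∀ x y : X, ∃ f : ℝ → X, IsGeodesicFromTo f x y

/-- A geodesic ray (unit speed, defined on `[0,∞)`). -/
def IsGeodesicRayFun [MetricSpace X] (f : ℝ → X) : Prop :=
  ∀ s t : ℝ, 0 ≤ s → 0 ≤ t → dist (f s) (f t) = |s - t|

/-- A bi-infinite geodesic line. -/
def IsGeodesicLineFun [MetricSpace X] (f : ℝ → X) : Prop :=
  ∀ s t : ℝ, dist (f s) (f t) = |s - t|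

/-- The type of geodesic rays in `X`. -/
def GeodesicRay (X : Type*) [MetricSpace X] : Type _ := {f : ℝ → X // IsGeodesicRayFun f}

/-- Two geodesic rays are equivalent if they are at bounded (Hausdorff) distance. -/
instance raySetoid (X : Type*) [MetricSpace X] : Setoid (GeodesicRay X) where
  r f g := ∃ C : ℝ, ∀ t : ℝ, 0 ≤ t → dist (f.1 t) (g.1 t) ≤ C
  iseqv := by
    refine ⟨fun f => ⟨0, fun t _ => by simp⟩, ?_, ?_⟩
    · rintro f g ⟨C, h⟩
      exact ⟨C, fun t ht => by rw [dist_comm]; exact h t ht⟩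
    · rintro f g k ⟨C, h⟩ ⟨D, h'⟩
      exact ⟨C + D, fun t ht =>
        (dist_triangle _ (g.1 t) _).trans (add_le_add (h t ht) (h' t ht))⟩

/-- The Gromov boundary of `X`: equivalence classes of geodesic rays at bounded
Hausdorff distance from each other. -/
def GromovBoundary (X : Type*) [MetricSpace X] : Type _ := Quotient (raySetoid X)

/-- The boundary point determined by a geodesic ray. -/
def GromovBoundary.mk [MetricSpace X] (f : GeodesicRay X) : GromovBoundary X :=
  Quotient.mk (raySetoid X) f

/-- An isometry maps geodesic rays to geodesic rays. -/
def rayMap [MetricSpace X] (g : X ≃ᵢ X) (f : GeodesicRay X) : GeodesicRay X :=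
  ⟨fun t => g (f.1 t), fun s t hs ht => by
    rw [IsometryEquiv.dist_eq]; exact f.2 s t hs ht⟩

/-- The induced homeomorphism of the Gromov boundary. -/
def boundaryMap [MetricSpace X] (g : X ≃ᵢ X) : GromovBoundary X → GromovBoundary X :=
  Quotient.map (rayMap g) (by
    rintro f f' ⟨C, h⟩
    refine ⟨C, fun t ht => ?_⟩
    simpa [rayMap, IsometryEquiv.dist_eq] using h t ht)

/-- The fixed points of an isometry on the Gromov boundary. -/
def boundaryFixedPoints [MetricSpace X] (g : X ≃ᵢ X) : Set (GromovBoundary X) :=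
  {ξ | boundaryMap g ξ = ξ}

/-- An isometry is hyperbolic if it has infinite order and exactly two fixed
points on the Gromov boundary. -/
def IsHyperbolicIsom [MetricSpace X] (g : X ≃ᵢ X) : Prop :=
  ¬ IsOfFinOrder g ∧ ∃ ξ η : GromovBoundary X, ξ ≠ η ∧ boundaryFixedPoints g = {ξ, η}

/-- The compact-open topology on the isometry group of `X`. -/
instance isomTopology [MetricSpace X] : TopologicalSpace (X ≃ᵢ X) :=
  TopologicalSpace.induced (fun g : X ≃ᵢ X => (⟨g, g.continuous⟩ : C(X, X)))
    ContinuousMap.compactOpen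

instance isomMeasurableSpace [MetricSpace X] : MeasurableSpace (X ≃ᵢ X) := borel _

/-- The sequence `x` converges to the boundary point determined by the ray `f`:
the Gromov products `(x n | f t)_o` tend to infinity. -/
def ConvergesToRay [MetricSpace X] (o : X) (x : ℕ → X) (f : GeodesicRay X) : Prop :=
  ∀ M : ℝ, ∃ N : ℕ, ∃ T : ℝ, ∀ n ≥ N, ∀ t ≥ T, M ≤ gromovProd o (x n) (f.1 t)

/-- The limit set of a set `S` of isometries: all accumulation points in the
Gromov boundary of the orbit `S o`. -/
def gromovLimitSet [MetricSpace X] (o : X) (S : Set (X ≃ᵢ X)) : Set (GromovBoundary X) :=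
  {ξ | ∃ x : ℕ → X, (∀ n, ∃ g ∈ S, x n = g o) ∧
    ∃ f : GeodesicRay X, GromovBoundary.mk f = ξ ∧ ConvergesToRay o x f}

/-- A set of isometries is non-elementary if its limit set has more than two points. -/
def IsNonElementary [MetricSpace X] (o : X) (S : Set (X ≃ᵢ X)) : Prop :=
  ∃ ξ₁ ξ₂ ξ₃ : GromovBoundary X, ξ₁ ∈ gromovLimitSet o S ∧ ξ₂ ∈ gromovLimitSet o S ∧
    ξ₃ ∈ gromovLimitSet o S ∧ ξ₁ ≠ ξ₂ ∧ ξ₁ ≠ ξ₃ ∧ ξ₂ ≠ ξ₃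

/-- A set of isometries acts cocompactly on `X`. -/
def ActsCocompactly [MetricSpace X] (S : Set (X ≃ᵢ X)) : Prop :=
  ∃ C : Set X, IsCompact C ∧ ∀ x : X, ∃ g ∈ S, ∃ c ∈ C, g c = x

/-- A uniform lattice in `Isom(X)`: a discrete subgroup acting cocompactly on `X`. -/
def IsUniformLattice [MetricSpace X] (Γ : Subgroup (X ≃ᵢ X)) : Prop :=
  DiscreteTopology Γ ∧ ActsCocompactly (Γ : Set (X ≃ᵢ X))

/-- Convergence of the Poincaré series of `Γ` at the exponent `s`. -/
def PoincareSummable [MetricSpace X] (o : X) (Γ : Subgroup (X ≃ᵢ X)) (s : ℝ) : Prop :=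
  Summable fun γ : Γ => Real.exp (-s * dist o (γ.1 o))

/-- The critical exponent of a (discrete) group of isometries. -/
def critExp [MetricSpace X] (o : X) (Γ : Subgroup (X ≃ᵢ X)) : ℝ :=
  sInf {s : ℝ | 0 ≤ s ∧ PoincareSummable o Γ s}

/-- `Γ` is of divergence type: the Poincaré series diverges at the critical exponent. -/
def DivergenceType [MetricSpace X] (o : X) (Γ : Subgroup (X ≃ᵢ X)) : Prop :=
  ¬ PoincareSummable o Γ (critExp o Γ)

/-- The Gromov product of two boundary points, computed along representative rays. -/
def rayGromovProd [MetricSpace X] (o : X) (f g : GeodesicRay X) : ℝ :=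
  Filter.liminf (fun t : ℝ => gromovProd o (f.1 t) (g.1 t)) Filter.atTop

/-- `m` is a visual metric on the Gromov boundary with parameter `a` and basepoint `o`. -/
def IsVisualMetric [MetricSpace X] (o : X) (m : MetricSpace (GromovBoundary X)) (a : ℝ) : Prop :=
  1 < a ∧ ∃ k₁ k₂ : ℝ, 0 < k₁ ∧ 0 < k₂ ∧ ∀ f g : GeodesicRay X,
    k₁ * a ^ (-(rayGromovProd o f g)) ≤
        @dist _ m.toPseudoMetricSpace.toDist (GromovBoundary.mk f) (GromovBoundary.mk g) ∧
      @dist _ m.toPseudoMetricSpace.toDist (GromovBoundary.mk f) (GromovBoundary.mk g) ≤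
        k₂ * a ^ (-(rayGromovProd o f g))

/-- `d` is the Hausdorff dimension of the Gromov boundary of `X`: the Hausdorff
dimension of a visual metric with parameter `a` equals `log a * d`. -/
def HasBoundaryDim (X : Type*) [MetricSpace X] (o : X) (d : ℝ) : Prop :=
  0 ≤ d ∧ ∃ (m : MetricSpace (GromovBoundary X)) (a : ℝ), IsVisualMetric o m a ∧
    @dimH (GromovBoundary X) (@MetricSpace.toEMetricSpace _ m) Set.univ
      = ENNReal.ofReal (Real.log a * d)

/-- The Chabauty space of closed subgroups of a topological group. -/
def ChabautySpace (G : Type*) [Group G] [TopologicalSpace G] : Type _ :=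
  {H : Subgroup G // IsClosed (H : Set G)}

/-- The Chabauty topology, generated by the sets
`{H : H ∩ U ≠ ∅}` for `U` open and `{H : H ∩ K = ∅}` for `K` compact. -/
instance chabautyTopology (G : Type*) [Group G] [TopologicalSpace G] :
    TopologicalSpace (ChabautySpace G) :=
  TopologicalSpace.generateFrom
    ({S | ∃ U : Set G, IsOpen U ∧ S = {H : ChabautySpace G | ((H.1 : Set G) ∩ U).Nonempty}} ∪
      {S | ∃ K : Set G, IsCompact K ∧ S = {H : ChabautySpace G | (H.1 : Set G) ∩ K = ∅}})

instance chabautyMeasurableSpace (G : Type*) [Group G] [TopologicalSpace G] :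
    MeasurableSpace (ChabautySpace G) := borel _

/-- Conjugation of a subgroup. -/
def conjSubgroup {G : Type*} [Group G] (g : G) (H : Subgroup G) : Subgroup G :=
  Subgroup.map (MulAut.conj g).toMonoidHom H

lemma conjSubgroup_coe {G : Type*} [Group G] (g : G) (H : Subgroup G) :
    (conjSubgroup g H : Set G) = (fun x => g * x * g⁻¹) '' (H : Set G) := by
  ext x
  simp [conjSubgroup, Subgroup.mem_map, Set.mem_image]

/-- Conjugation on the Chabauty space of a topological group. -/
def chabautyConj {G : Type*} [Group G] [TopologicalSpace G] [IsTopologicalGroup G]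
    (g : G) (H : ChabautySpace G) : ChabautySpace G :=
  ⟨conjSubgroup g H.1, by
    have h1 : (conjSubgroup g H.1 : Set G) = (fun x => g⁻¹ * x * g) ⁻¹' (H.1 : Set G) := by
      rw [conjSubgroup_coe]
      ext x
      constructor
      · rintro ⟨y, hy, rfl⟩
        simpa [mul_assoc] using hy
      · intro hx
        exact ⟨g⁻¹ * x * g, hx, by group⟩
    rw [h1]
    exact H.2.preimage (by continuity)⟩

/-- An invariant random subgroup: a conjugation-invariant Borel probability
measure on the Chabauty space of closed subgroups. -/
def IsIRS {G : Type*} [Group G] [TopologicalSpace G] [IsTopologicalGroup G]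
    (μ : Measure (ChabautySpace G)) : Prop :=
  IsProbabilityMeasure μ ∧ ∀ g : G, Measure.map (chabautyConj g) μ = μ

end

/-!
Discreteness of `Γ` in the compact-open topology yields a compact set `K₀` and `ε > 0` such that
distinct elements of `Γ` are `ε` apart somewhere on `K₀`. The elements of `Γ` moving a compact
set `A` to meet a compact set `B` all map `K₀` into one compact set, and an `ε`-separated family
of `1`-Lipschitz maps between totally bounded sets is finite. Cocompactness, `X = Γ K`, lets one
move `g₁ C` and `g₂ C` by elements `γ₁, γ₂` of `Γ` into `K' = cthickening (diam C) K`; then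
`γ ↦ γ₂⁻¹ γ γ₁` maps the set to be counted injectively into `{γ | γ K' ∩ K' ≠ ∅}`, which is
finite and independent of `g₁, g₂`.
-/

theorem finite_of_separated_lipschitzWith_one {ι X Y : Type*} [PseudoMetricSpace X]
    [PseudoMetricSpace Y] {K : Set X} {L : Set Y} (hK : TotallyBounded K) (hL : TotallyBounded L)
    {ε : ℝ} (hε : 0 < ε) (F : ι → X → Y) (hF : ∀ i, LipschitzWith 1 (F i))
    (hFL : ∀ i, MapsTo (F i) K L)
    (hsep : ∀ i j, (∀ x ∈ K, dist (F i x) (F j x) < ε) → i = j) :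
    Finite ι := by
  obtain ⟨t, htK, htfin, hKt⟩ := finite_approx_of_totallyBounded hK (ε / 4) (by positivity)
  obtain ⟨u, hufin, hLu⟩ := Metric.totallyBounded_iff.1 hL (ε / 4) (by positivity)
  have : Finite t := htfin.to_subtype
  have : Finite u := hufin.to_subtype
  have hnear : ∀ i (x : t), ∃ y : u, dist (F i x) y < ε / 4 := fun i x => by
    obtain ⟨y, hyu, hy⟩ := mem_iUnion₂.1 (hLu (hFL i (htK x.2)))
    exact ⟨⟨y, hyu⟩, hy⟩
  choose c hc using hnear
  have hlip : ∀ i z x, dist (F i z) (F i x) ≤ dist z x := fun i z x => by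
    simpa using (hF i).dist_le_mul z x
  refine Finite.of_injective c fun i j hij => hsep i j fun z hz => ?_
  obtain ⟨x, hxt, hzx⟩ := mem_iUnion₂.1 (hKt hz)
  obtain ⟨y, hi, hj⟩ : ∃ y : Y, dist (F i x) y < ε / 4 ∧ dist (F j x) y < ε / 4 :=
    ⟨_, hc i ⟨x, hxt⟩, hij ▸ hc j ⟨x, hxt⟩⟩
  rw [mem_ball] at hzx
  calc dist (F i z) (F j z)
      ≤ dist (F i z) (F i x) + dist (F i x) y + dist y (F j x) + dist (F j x) (F j z) :=
        (dist_triangle _ (F j x) _).trans (by gcongr; exact dist_triangle4 _ _ _ _)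
    _ < ε := by linarith [hlip i z x, hlip j x z, dist_comm y (F j x), dist_comm x z]

section

variable {X : Type*} [MetricSpace X]

def touchingSet (Γ : Subgroup (X ≃ᵢ X)) (A B : Set X) : Set Γ :=
  {γ | ((γ : X ≃ᵢ X) '' A ∩ B).Nonempty}

open Topology in
theorem exists_isCompact_eq_of_forall_dist_lt (Γ : Subgroup (X ≃ᵢ X)) [DiscreteTopology Γ] :
    ∃ K₀ : Set X, IsCompact K₀ ∧ ∃ ε > 0, ∀ γ δ : Γ,
      (∀ x ∈ K₀, dist ((γ : X ≃ᵢ X) x) ((δ : X ≃ᵢ X) x) < ε) → γ = δ := by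
  let ι : Γ → C(X, X) := fun γ => ⟨γ.1, γ.1.continuous⟩
  have hι : IsInducing ι :=
    (IsInducing.induced fun g : X ≃ᵢ X => (⟨g, g.continuous⟩ : C(X, X))).comp .subtypeVal
  have h1 : {1} ∈ 𝓝 (1 : Γ) := (isOpen_discrete _).mem_nhds rfl
  rw [hι.nhds_eq_comap, ((nhds_basis_uniformity
    Metric.uniformity_basis_dist.compactConvergenceUniformity).comap ι).mem_iff] at h1
  obtain ⟨⟨K₀, ε⟩, ⟨hK₀, hε⟩, hsub⟩ := h1
  refine ⟨K₀, hK₀, ε, hε, fun γ δ hγδ => inv_mul_eq_one.1 (hsub fun x hx => ?_)⟩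
  change dist (((γ⁻¹ * δ : Γ) : X ≃ᵢ X) x) x < ε
  rw [Subgroup.coe_mul, Subgroup.coe_inv, IsometryEquiv.mul_apply, ← (γ : X ≃ᵢ X).dist_eq,
    IsometryEquiv.apply_inv_self, dist_comm]
  exact hγδ x hx

theorem finite_touchingSet [ProperSpace X] (Γ : Subgroup (X ≃ᵢ X)) [DiscreteTopology Γ]
    {A B : Set X} (hA : IsCompact A) (hB : IsCompact B) : (touchingSet Γ A B).Finite := by
  obtain ⟨K₀, hK₀, ε, hε, hsep⟩ := exists_isCompact_eq_of_forall_dist_lt Γ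
  have hmaps : ∀ γ ∈ touchingSet Γ A B,
      MapsTo (γ : X ≃ᵢ X) K₀ (cthickening (diam (K₀ ∪ A)) B) := by
    rintro γ ⟨_, ⟨a, ha, rfl⟩, hb⟩ x hx
    refine mem_cthickening_of_dist_le _ _ _ _ hb ?_
    rw [IsometryEquiv.dist_eq]
    exact dist_le_diam_of_mem (hK₀.union hA).isBounded (Or.inl hx) (Or.inr ha)
  rw [← Set.finite_coe_iff]
  exact finite_of_separated_lipschitzWith_one hK₀.totallyBounded
    hB.cthickening.totallyBounded hε (fun γ => (γ.1 : X ≃ᵢ X))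
    (fun γ => γ.1.1.isometry.lipschitz) (fun γ => hmaps γ.1 γ.2)
    (fun γ δ h => Subtype.ext (hsep γ.1 δ.1 h))

theorem touchingSet_subset_image {Γ : Subgroup (X ≃ᵢ X)} {A B A' B' : Set X} (γ₁ γ₂ : Γ)
    (hA : A ⊆ (γ₁ : X ≃ᵢ X) '' A') (hB : B ⊆ (γ₂ : X ≃ᵢ X) '' B') :
    touchingSet Γ A B ⊆ (fun δ => γ₂ * δ * γ₁⁻¹) '' touchingSet Γ A' B' := by
  rintro γ ⟨_, ⟨a, ha, rfl⟩, hb⟩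
  obtain ⟨a', ha', rfl⟩ := hA ha
  obtain ⟨b', hb', hbb'⟩ := hB hb
  refine ⟨γ₂⁻¹ * γ * γ₁, ⟨b', ⟨a', ha', ?_⟩, hb'⟩, by group⟩
  simp [← hbb']

theorem exists_image_subset_image_cthickening
    (Γ : Subgroup (X ≃ᵢ X)) {K : Set X} (hK : ∀ x, ∃ γ ∈ Γ, ∃ c ∈ K, γ c = x)
    {C : Set X} (hC : Bornology.IsBounded C) (g : X ≃ᵢ X) :
    ∃ γ : Γ, g '' C ⊆ (γ : X ≃ᵢ X) '' cthickening (diam C) K := by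
  rcases C.eq_empty_or_nonempty with rfl | ⟨o, ho⟩
  · exact ⟨1, by simp⟩
  obtain ⟨γ, hγ, c, hc, hco⟩ := hK (g o)
  refine ⟨⟨γ, hγ⟩, ?_⟩
  rintro _ ⟨y, hy, rfl⟩
  refine ⟨γ.symm (g y), mem_cthickening_of_dist_le _ c _ _ hc ?_, γ.apply_symm_apply _⟩
  rw [← γ.dist_eq, γ.apply_symm_apply, hco, g.dist_eq]
  exact dist_le_diam_of_mem hC hy ho

end

theorem uniform_lattice_uniformly_bounded_intersections_general
    {X : Type*} [MetricSpace X] [ProperSpace X]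
    (Γ : Subgroup (X ≃ᵢ X)) (hΓ : IsUniformLattice Γ)
    (C : Set X) (hC : IsCompact C) :
    ∃ n : ℕ, 0 < n ∧ ∀ g₁ g₂ : X ≃ᵢ X,
      ({γ : Γ | (((γ : X ≃ᵢ X) '' (g₁ '' C)) ∩ (g₂ '' C)).Nonempty}).Finite ∧
      ({γ : Γ | (((γ : X ≃ᵢ X) '' (g₁ '' C)) ∩ (g₂ '' C)).Nonempty}).ncard ≤ n := by
  obtain ⟨hdisc, K, hK, hcov⟩ := hΓ
  set K' := cthickening (diam C) K
  have hfin : (touchingSet Γ K' K').Finite :=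
    finite_touchingSet Γ hK.cthickening hK.cthickening
  refine ⟨(touchingSet Γ K' K').ncard + 1, Nat.succ_pos _, fun g₁ g₂ => ?_⟩
  obtain ⟨γ₁, h₁⟩ := exists_image_subset_image_cthickening Γ hcov hC.isBounded g₁
  obtain ⟨γ₂, h₂⟩ := exists_image_subset_image_cthickening Γ hcov hC.isBounded g₂
  have hsub := touchingSet_subset_image γ₁ γ₂ h₁ h₂
  exact ⟨(hfin.image _).subset hsub,
    (ncard_le_ncard hsub (hfin.image _)).trans ((ncard_image_le hfin).trans (Nat.le_succ _))⟩

/-- Let `X` be a proper geodesic metric space, `Γ` a uniform lattice in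
`Isom(X)` and `C ⊆ X` compact.  There is `n > 0` such that
`|{γ ∈ Γ : γg₁C ∩ g₂C ≠ ∅}| ≤ n` for all `g₁, g₂ ∈ Isom(X)`. -/
theorem uniform_lattice_uniformly_bounded_intersections
    {X : Type*} [MetricSpace X] [ProperSpace X]
    (hgeo : IsGeodesicSpace X)
    (Γ : Subgroup (X ≃ᵢ X)) (hΓ : IsUniformLattice Γ)
    (C : Set X) (hC : IsCompact C) :
    ∃ n : ℕ, 0 < n ∧ ∀ g₁ g₂ : X ≃ᵢ X,
      ({γ : Γ | (((γ : X ≃ᵢ X) '' (g₁ '' C)) ∩ (g₂ '' C)).Nonempty}).Finite ∧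
      ({γ : Γ | (((γ : X ≃ᵢ X) '' (g₁ '' C)) ∩ (g₂ '' C)).Nonempty}).ncard ≤ n :=
  uniform_lattice_uniformly_bounded_intersections_general Γ hΓ C hC
end

section
/- Let X be a proper geodesic Gromov hyperbolic metric space with basepoint o ∈ X and Γ a uniform lattice in Isom(X). For all sufficiently large radii k, R > 0 there is an integer p ∈ ℕ such that for every r > 0 the shadows S_R(o, γo) with γ ∈ A_Γ[r, r+k] cover ∂X, and moreover each ideal point ξ ∈ ∂X belongs to at most p of these shadows. -/
/-!
Cocompactness gives `D` such that every point of `X` lies within `D` of the orbit `Γ o`, and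
discreteness makes every ball contain finitely many orbit points, at most
`#{γ | d(γ o, o) ≤ c + D}` in a ball of radius `c` (translate its centre next to `o`).
Every boundary point `ξ` is the endpoint of a ray `f` from `o` (a limit of geodesic segments,
by properness), and any two rays from `o` to `ξ` are `4δ`-close. Hence an orbit point within `D`
of `f (r + D)` lies in the annulus and its shadow contains `ξ`; conversely every `γ o` in the
annulus whose shadow contains `ξ` lies within `k + 3R` of `f (max (r - R) 0)`, which bounds
their number independently of `r`.
-/

open MeasureTheory Metric Set Filter

noncomputable section

/-- The shadow from `x` of the ball of radius `R` around `y`: the set of ideal points `ξ`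
such that every geodesic ray from `x` to `ξ` meets `B_X(y, R)`. -/
def boundaryShadow {X : Type*} [MetricSpace X] (R : ℝ) (x y : X) :
    Set (GromovBoundary X) :=
  {ξ | ∀ f : GeodesicRay X, f.1 0 = x → GromovBoundary.mk f = ξ →
    ∃ t : ℝ, 0 ≤ t ∧ f.1 t ∈ ball y R}

open Topology

theorem Metric.finite_of_isBounded_of_pairwise_le_dist {Y : Type*} [PseudoMetricSpace Y]
    [ProperSpace Y] {s : Set Y} (hs : Bornology.IsBounded s) {ε : ℝ} (hε : 0 < ε)
    (hsep : s.Pairwise fun x y => ε ≤ dist x y) : s.Finite := by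
  obtain ⟨t, ht, hst⟩ :=
    Metric.totallyBounded_iff.1 (hs.isCompact_closure.totallyBounded.subset subset_closure)
      (ε / 2) (half_pos hε)
  refine (ht.biUnion fun y _ => Set.Subsingleton.finite (s := s ∩ ball y (ε / 2)) ?_).subset
    fun x hx => ?_
  · rintro a ⟨has, hay⟩ b ⟨hbs, hby⟩
    by_contra hab
    have := dist_triangle_right a b y
    linarith [hsep has hbs hab, mem_ball.1 hay, mem_ball.1 hby]
  · obtain ⟨y, hyt, hxy⟩ := mem_iUnion₂.1 (hst hx)
    exact mem_iUnion₂.2 ⟨y, hyt, hx, hxy⟩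

section Lattice

variable {X : Type*} [MetricSpace X] {Γ : Subgroup (X ≃ᵢ X)}

theorem ActsCocompactly.exists_dist_apply_le {S : Set (X ≃ᵢ X)} (hS : ActsCocompactly S)
    (o : X) : ∃ D, 0 ≤ D ∧ ∀ x : X, ∃ g ∈ S, dist (g o) x ≤ D := by
  obtain ⟨C, hC, hcover⟩ := hS
  obtain ⟨D, hD⟩ := hC.isBounded.subset_closedBall o
  refine ⟨max D 0, le_max_right _ _, fun x => ?_⟩
  obtain ⟨g, hg, c, hc, rfl⟩ := hcover x
  refine ⟨g, hg, ?_⟩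
  rw [g.dist_eq, dist_comm]
  exact (hD hc).trans (le_max_left _ _)

theorem exists_isCompact_eq_one_of_forall_dist_lt [DiscreteTopology Γ] :
    ∃ (K : Set X) (ε : ℝ), IsCompact K ∧ 0 < ε ∧
      ∀ γ : Γ, (∀ x ∈ K, dist x ((γ : X ≃ᵢ X) x) < ε) → γ = 1 := by
  let ι : (X ≃ᵢ X) → C(X, X) := fun g => ⟨g, g.continuous⟩
  have h1 : ({1} : Set Γ) ∈ 𝓝 (1 : Γ) := by simp
  rw [nhds_subtype_eq_comap, show 𝓝 ((1 : Γ) : X ≃ᵢ X) = comap ι (𝓝 (ι 1)) from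
    nhds_induced ι _] at h1
  obtain ⟨W1, hW1, hsub1⟩ := mem_comap.1 h1
  obtain ⟨W, hW, hsub⟩ := mem_comap.1 hW1
  obtain ⟨⟨K, ε⟩, ⟨hK, hε⟩, hKε⟩ := (nhds_basis_uniformity'
    (Metric.uniformity_basis_dist.compactConvergenceUniformity (α := X) (β := X))).mem_iff.1 hW
  exact ⟨K, ε, hK, hε, fun γ hγ => hsub1 (hsub (hKε fun x hx => hγ x hx))⟩

theorem exists_finset_le_dist_of_ne [DiscreteTopology Γ] :
    ∃ (T : Finset X) (ε : ℝ), 0 < ε ∧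
      ∀ γ β : Γ, γ ≠ β → ∃ z ∈ T, ε ≤ dist ((γ : X ≃ᵢ X) z) ((β : X ≃ᵢ X) z) := by
  obtain ⟨K, ε, hK, hε, hsep⟩ := exists_isCompact_eq_one_of_forall_dist_lt (Γ := Γ)
  obtain ⟨T, -, hT, hKT⟩ := finite_cover_balls_of_compact hK (div_pos hε three_pos)
  refine ⟨hT.toFinset, ε / 3, div_pos hε three_pos, fun γ β hne => ?_⟩
  obtain ⟨x, hxK, hx⟩ : ∃ x ∈ K, ε ≤ dist ((γ : X ≃ᵢ X) x) ((β : X ≃ᵢ X) x) := by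
    by_contra! h
    refine hne (inv_mul_eq_one.1 (hsep (β⁻¹ * γ) fun x hx => ?_)).symm
    rw [← (β : X ≃ᵢ X).dist_eq, Subgroup.coe_mul, Subgroup.coe_inv, IsometryEquiv.mul_apply,
      IsometryEquiv.apply_inv_self, dist_comm]
    exact h x hx
  obtain ⟨z, hzT, hxz⟩ := mem_iUnion₂.1 (hKT hxK)
  refine ⟨z, hT.mem_toFinset.2 hzT, ?_⟩
  have hγ := (γ : X ≃ᵢ X).dist_eq x z
  have hβ := (β : X ≃ᵢ X).dist_eq z x
  have := dist_triangle4 ((γ : X ≃ᵢ X) x) ((γ : X ≃ᵢ X) z) ((β : X ≃ᵢ X) z) ((β : X ≃ᵢ X) x)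
  rw [dist_comm z x] at hβ
  linarith [mem_ball.1 hxz]

theorem finite_setOf_dist_apply_le [ProperSpace X] [DiscreteTopology Γ] (o x : X) (c : ℝ) :
    {γ : Γ | dist ((γ : X ≃ᵢ X) o) x ≤ c}.Finite := by
  obtain ⟨T, ε, hε, hsep⟩ := exists_finset_le_dist_of_ne (Γ := Γ)
  obtain ⟨M, hM⟩ := T.finite_toSet.isBounded.subset_closedBall o
  replace hM : ∀ z ∈ T, dist z o ≤ max M 0 := fun z hz => (hM hz).trans (le_max_left _ _)
  let Φ : Γ → (T → X) := fun γ z => (γ : X ≃ᵢ X) z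
  have hΦ : ∀ γ β : Γ, γ ≠ β → ε ≤ dist (Φ γ) (Φ β) := fun γ β hne => by
    obtain ⟨z, hz, hle⟩ := hsep γ β hne
    exact hle.trans (dist_le_pi_dist (Φ γ) (Φ β) ⟨z, hz⟩)
  have hinj : Function.Injective Φ := fun γ β h => by
    by_contra hne
    linarith [hΦ γ β hne, dist_eq_zero.2 h]
  refine Set.Finite.of_finite_image (Metric.finite_of_isBounded_of_pairwise_le_dist
    ((isBounded_closedBall (x := fun _ => x) (r := max M 0 + c)).subset ?_) hε ?_) hinj.injOn
  · rintro _ ⟨γ, hγ, rfl⟩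
    have hγ : dist ((γ : X ≃ᵢ X) o) x ≤ c := hγ
    refine (dist_pi_le_iff (by linarith [le_max_right M 0, dist_nonneg.trans hγ])).2
      fun ⟨z, hz⟩ => ?_
    have := dist_triangle ((γ : X ≃ᵢ X) z) ((γ : X ≃ᵢ X) o) x
    rw [(γ : X ≃ᵢ X).dist_eq] at this
    linarith [hM z hz]
  · rintro _ ⟨γ, -, rfl⟩ _ ⟨β, -, rfl⟩ hne
    exact hΦ γ β fun h => hne (h ▸ rfl)

theorem ncard_setOf_dist_apply_le_le [ProperSpace X] [DiscreteTopology Γ] {o : X} {D : ℝ}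
    (hD : ∀ x : X, ∃ γ : Γ, dist ((γ : X ≃ᵢ X) o) x ≤ D) (x : X) (c : ℝ) :
    {γ : Γ | dist ((γ : X ≃ᵢ X) o) x ≤ c}.ncard ≤
      {γ : Γ | dist ((γ : X ≃ᵢ X) o) o ≤ c + D}.ncard := by
  obtain ⟨γ₀, hγ₀⟩ := hD x
  calc {γ : Γ | dist ((γ : X ≃ᵢ X) o) x ≤ c}.ncard
      ≤ ((γ₀ * ·) '' {γ : Γ | dist ((γ : X ≃ᵢ X) o) o ≤ c + D}).ncard := by
        refine Set.ncard_le_ncard (fun γ hγ => ⟨γ₀⁻¹ * γ, ?_, mul_inv_cancel_left γ₀ γ⟩)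
          ((finite_setOf_dist_apply_le o o _).image _)
        have hγ : dist ((γ : X ≃ᵢ X) o) x ≤ c := hγ
        show dist (((γ₀ : X ≃ᵢ X))⁻¹ ((γ : X ≃ᵢ X) o)) o ≤ c + D
        rw [← (γ₀ : X ≃ᵢ X).dist_eq, IsometryEquiv.apply_inv_self]
        linarith [dist_triangle_right ((γ : X ≃ᵢ X) o) ((γ₀ : X ≃ᵢ X) o) x]
    _ ≤ _ := Set.ncard_image_le (finite_setOf_dist_apply_le o o _)

end Lattice

def IsGromovHyperbolicWith (X : Type*) [MetricSpace X] (δ : ℝ) : Prop :=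
  ∀ o x y z : X, min (gromovProd o x y) (gromovProd o y z) - δ ≤ gromovProd o x z

section Hyperbolic

variable {X : Type*} [MetricSpace X] {o : X}

theorem gromovProd_comm (o x y : X) : gromovProd o x y = gromovProd o y x := by
  simp only [gromovProd, dist_comm x y, add_comm (dist x o)]

theorem IsGeodesicFromTo.dist_left {σ : ℝ → X} {x y : X} (hσ : IsGeodesicFromTo σ x y) {t : ℝ}
    (ht : t ∈ Icc 0 (dist x y)) : dist (σ t) x = t := by
  rw [← hσ.1, hσ.2.2 t ht 0 ⟨le_rfl, dist_nonneg⟩, sub_zero, abs_of_nonneg ht.1]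

theorem IsGeodesicFromTo.dist_right {σ : ℝ → X} {x y : X} (hσ : IsGeodesicFromTo σ x y) {t : ℝ}
    (ht : t ∈ Icc 0 (dist x y)) : dist (σ t) y = dist x y - t := by
  conv_lhs => rw [← hσ.2.1]
  rw [hσ.2.2 t ht _ ⟨dist_nonneg, le_rfl⟩, abs_sub_comm, abs_of_nonneg (sub_nonneg.2 ht.2)]

namespace GeodesicRay

theorem dist_apply_apply (f : GeodesicRay X) {s t : ℝ} (hs : 0 ≤ s) (hst : s ≤ t) :
    dist (f.1 s) (f.1 t) = t - s := by
  rw [f.2 s t hs (hs.trans hst), abs_sub_comm, abs_of_nonneg (sub_nonneg.2 hst)]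

theorem dist_apply_of_apply_zero (f : GeodesicRay X) (h0 : f.1 0 = o) {t : ℝ} (ht : 0 ≤ t) :
    dist (f.1 t) o = t := by
  rw [← h0, dist_comm, f.dist_apply_apply le_rfl ht, sub_zero]

theorem gromovProd_apply_apply (f : GeodesicRay X) (h0 : f.1 0 = o) {s t : ℝ} (hs : 0 ≤ s)
    (hst : s ≤ t) : gromovProd o (f.1 s) (f.1 t) = s := by
  simp only [gromovProd, f.dist_apply_of_apply_zero h0 hs,
    f.dist_apply_of_apply_zero h0 (hs.trans hst), f.dist_apply_apply hs hst]
  ring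

end GeodesicRay

variable {δ : ℝ}

theorem IsGromovHyperbolicWith.nonneg (hX : IsGromovHyperbolicWith X δ) (x : X) : 0 ≤ δ := by
  simpa using hX x x x x

theorem IsGromovHyperbolicWith.dist_le_of_equiv (hX : IsGromovHyperbolicWith X δ)
    {f h : GeodesicRay X} (hf0 : f.1 0 = o) (hh0 : h.1 0 = o) (hfh : f ≈ h) {t : ℝ}
    (ht : 0 ≤ t) : dist (f.1 t) (h.1 t) ≤ 4 * δ := by
  obtain ⟨C, hC⟩ := hfh
  have hC0 : 0 ≤ C := dist_nonneg.trans (hC 0 le_rfl)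
  obtain ⟨T, hT⟩ : ∃ T, T = t + C / 2 := ⟨_, rfl⟩
  have hT0 : 0 ≤ T := by rw [hT]; positivity
  have htT : t ≤ T := by rw [hT]; linarith
  -- At time `T` the two rays have Gromov product at least `t`; two applications of the
  -- four-point condition carry this back to time `t`.
  have hprodT : t ≤ gromovProd o (f.1 T) (h.1 T) := by
    simp only [gromovProd, f.dist_apply_of_apply_zero hf0 hT0, h.dist_apply_of_apply_zero hh0 hT0]
    linarith [hC T hT0]
  have hf := f.gromovProd_apply_apply hf0 ht htT
  have hh := h.gromovProd_apply_apply hh0 ht htT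
  rw [gromovProd_comm] at hh
  have h1 := hX o (f.1 t) (f.1 T) (h.1 T)
  rw [hf, min_eq_left hprodT] at h1
  have h2 := hX o (f.1 t) (h.1 T) (h.1 t)
  rw [hh] at h2
  have h3 := le_min h1 (by linarith [hX.nonneg o] : t - δ ≤ t)
  simp only [gromovProd, f.dist_apply_of_apply_zero hf0 ht, h.dist_apply_of_apply_zero hh0 ht]
    at h2 h3
  linarith

theorem IsGromovHyperbolicWith.dist_segment_ray_le (hX : IsGromovHyperbolicWith X δ)
    (g : GeodesicRay X) {σ : ℝ → X} {T : ℝ} (hσ : IsGeodesicFromTo σ o (g.1 T)) {t : ℝ}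
    (ht : 0 ≤ t) (htT : t + dist (g.1 0) o ≤ T) :
    dist (σ t) (g.1 t) ≤ 3 * dist (g.1 0) o + 2 * δ := by
  set a := dist (g.1 0) o
  have ha : 0 ≤ a := dist_nonneg
  have hgT : T - a ≤ dist (g.1 T) o := by
    have := dist_triangle (g.1 0) o (g.1 T)
    rw [g.dist_apply_apply le_rfl (by linarith), sub_zero, dist_comm o] at this
    linarith
  have htD : t ∈ Icc 0 (dist o (g.1 T)) := ⟨ht, by rw [dist_comm]; linarith⟩
  have hgt : |dist (g.1 t) o - t| ≤ a := by
    have := abs_dist_sub_le o (g.1 0) (g.1 t)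
    rwa [dist_comm o, g.dist_apply_apply le_rfl ht, sub_zero, dist_comm o] at this
  have hσgT : gromovProd o (σ t) (g.1 T) = t := by
    simp only [gromovProd, hσ.dist_left htD, hσ.dist_right htD, dist_comm (g.1 T) o]
    ring
  have hgTgt : t - a ≤ gromovProd o (g.1 T) (g.1 t) := by
    simp only [gromovProd, dist_comm (g.1 T) (g.1 t), g.dist_apply_apply ht (by linarith : t ≤ T)]
    linarith [neg_abs_le (dist (g.1 t) o - t)]
  have h := hX o (σ t) (g.1 T) (g.1 t)
  have hmin := le_min (by linarith : t - a ≤ gromovProd o (σ t) (g.1 T)) hgTgt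
  simp only [gromovProd, hσ.dist_left htD] at h hmin
  linarith [le_abs_self (dist (g.1 t) o - t)]

theorem exists_mapClusterPt_of_forall_dist_le [ProperSpace X] {ι : Type*} (o : X) {B : ι → ℝ}
    {u : ℕ → ι → X} (hu : ∀ n i, dist (u n i) o ≤ B i) : ∃ F : ι → X, MapClusterPt F atTop u := by
  obtain ⟨F, -, hF⟩ := (isCompact_univ_pi fun i => isCompact_closedBall o (B i)).exists_mapClusterPt
    (f := atTop) (u := u) (tendsto_principal.2 (Eventually.of_forall fun n i _ => hu n i))
  exact ⟨F, hF⟩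

theorem exists_ray_mapClusterPt [ProperSpace X] {y : ℕ → X} {σ : ℕ → ℝ → X}
    (hσ : ∀ n, IsGeodesicFromTo (σ n) o (y n))
    (hy : Tendsto (fun n => dist o (y n)) atTop atTop) :
    ∃ f : GeodesicRay X, f.1 0 = o ∧ ∀ t, 0 ≤ t → MapClusterPt (f.1 t) atTop fun n => σ n t := by
  -- `σ n` is only meaningful on `[0, dist o (y n)]`; extended by `o`, it stays in the
  -- compact set `Π t, closedBall o |t|`.
  let u : ℕ → ℝ → X := fun n t => if t ∈ Icc 0 (dist o (y n)) then σ n t else o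
  have hu_eq : ∀ n t, t ∈ Icc 0 (dist o (y n)) → u n t = σ n t := fun n t h => if_pos h
  have hu : ∀ n t, dist (u n t) o ≤ |t| := fun n t => by
    by_cases h : t ∈ Icc 0 (dist o (y n))
    · rw [hu_eq n t h, (hσ n).dist_left h, abs_of_nonneg h.1]
    · simp only [u, if_neg h, dist_self, abs_nonneg]
  obtain ⟨F, hF⟩ := exists_mapClusterPt_of_forall_dist_le o hu
  have hev : ∀ t, 0 ≤ t → ∀ᶠ n in atTop, t ∈ Icc 0 (dist o (y n)) := fun t ht =>
    (hy.eventually_ge_atTop t).mono fun n hn => ⟨ht, hn⟩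
  have hray : IsGeodesicRayFun F := fun s t hs ht => by
    have hcl : IsClosed {G : ℝ → X | dist (G s) (G t) = |s - t|} :=
      isClosed_eq (by fun_prop) continuous_const
    refine hcl.mem_of_mapClusterPt hF (((hev s hs).and (hev t ht)).mono fun n ⟨hsn, htn⟩ => ?_)
    show dist (u n s) (u n t) = |s - t|
    rw [hu_eq n s hsn, hu_eq n t htn]
    exact (hσ n).2.2 s hsn t htn
  have h0 : F 0 = o := by
    refine (isClosed_eq (continuous_apply 0) continuous_const).mem_of_mapClusterPt
      (s := {G : ℝ → X | G 0 = o}) hF (Eventually.of_forall fun n => ?_)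
    show u n 0 = o
    rw [hu_eq n 0 ⟨le_rfl, dist_nonneg⟩]
    exact (hσ n).1
  refine ⟨⟨F, hray⟩, h0, fun t ht => ?_⟩
  have hFt : MapClusterPt (F t) atTop fun n => u n t :=
    hF.continuousAt_comp (continuous_apply t).continuousAt
  rwa [MapClusterPt, Filter.map_congr ((hev t ht).mono fun n => hu_eq n t)] at hFt

theorem IsGromovHyperbolicWith.exists_ray_equiv [ProperSpace X] (hX : IsGromovHyperbolicWith X δ)
    (hgeo : IsGeodesicSpace X) (o : X) (g : GeodesicRay X) :
    ∃ f : GeodesicRay X, f.1 0 = o ∧ f ≈ g := by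
  choose σ hσ using fun n : ℕ => hgeo o (g.1 n)
  have hy : Tendsto (fun n : ℕ => dist o (g.1 n)) atTop atTop := by
    refine tendsto_atTop_mono (fun n => ?_)
      (tendsto_atTop_add_const_right _ (-dist (g.1 0) o) tendsto_natCast_atTop_atTop)
    have := dist_triangle (g.1 0) o (g.1 n)
    rw [g.dist_apply_apply le_rfl n.cast_nonneg, sub_zero] at this
    linarith
  obtain ⟨f, hf0, hf⟩ := exists_ray_mapClusterPt hσ hy
  refine ⟨f, hf0, 3 * dist (g.1 0) o + 2 * δ, fun t ht => ?_⟩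
  exact (isClosed_le (continuous_id.dist continuous_const) continuous_const).mem_of_mapClusterPt
    (hf t ht) ((tendsto_natCast_atTop_atTop.eventually_ge_atTop (t + dist (g.1 0) o)).mono
      fun n hn => hX.dist_segment_ray_le g (hσ n) ht hn)

theorem IsGromovHyperbolicWith.exists_ray_mk_eq [ProperSpace X]
    (hX : IsGromovHyperbolicWith X δ) (hgeo : IsGeodesicSpace X) (o : X) (ξ : GromovBoundary X) :
    ∃ f : GeodesicRay X, f.1 0 = o ∧ GromovBoundary.mk f = ξ := by
  obtain ⟨g, rfl⟩ := Quotient.exists_rep ξ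
  obtain ⟨f, hf0, hfg⟩ := hX.exists_ray_equiv hgeo o g
  exact ⟨f, hf0, Quotient.sound hfg⟩

theorem IsGromovHyperbolicWith.mem_boundaryShadow (hX : IsGromovHyperbolicWith X δ)
    {f : GeodesicRay X} (hf0 : f.1 0 = o) {R t : ℝ} (ht : 0 ≤ t) {y : X}
    (hty : dist (f.1 t) y + 4 * δ < R) : GromovBoundary.mk f ∈ boundaryShadow R o y := by
  intro h hh0 hhf
  refine ⟨t, ht, mem_ball.2 ?_⟩
  have := hX.dist_le_of_equiv hh0 hf0 (Quotient.exact hhf) ht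
  linarith [dist_triangle (h.1 t) (f.1 t) y]

theorem dist_le_of_mem_boundaryShadow {f : GeodesicRay X} (hf0 : f.1 0 = o) {R r k : ℝ}
    {y : X} (hy : r ≤ dist y o ∧ dist y o ≤ r + k)
    (hshadow : GromovBoundary.mk f ∈ boundaryShadow R o y) :
    dist y (f.1 (max (r - R) 0)) ≤ k + 3 * R := by
  obtain ⟨t, ht, hty⟩ := hshadow f hf0 rfl
  rw [mem_ball] at hty
  have hft := f.dist_apply_of_apply_zero hf0 ht
  have ht_le : t ≤ r + k + R := by linarith [dist_triangle (f.1 t) y o]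
  have ht_ge : r - R ≤ t := by linarith [dist_triangle_left y o (f.1 t)]
  rw [dist_comm] at hty
  calc dist y (f.1 (max (r - R) 0))
      ≤ dist y (f.1 t) + dist (f.1 (max (r - R) 0)) (f.1 t) := dist_triangle_right _ _ _
    _ = dist y (f.1 t) + (t - max (r - R) 0) := by
        rw [f.dist_apply_apply (le_max_right _ _) (max_le ht_ge ht)]
    _ ≤ k + 3 * R := by
        rcases le_total (r - R) 0 with h | h
        · rw [max_eq_right h]; linarith
        · rw [max_eq_left h]; linarith

end Hyperbolic

/-- (Covering lemma for shadows.)  Let `Γ` be a uniform lattice in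
`Isom(X)`.  For all sufficiently large `k, R > 0` there is `p ∈ ℕ` such that for every
`r > 0` the shadows `S_R(o, γo)`, `γ ∈ A_Γ[r, r+k]`, cover `∂X`, and each ideal point lies
in at most `p` of them. -/
theorem shadows_cover_boundary_with_bounded_multiplicity
    {X : Type*} [MetricSpace X] [ProperSpace X]
    (hgeo : IsGeodesicSpace X) (hhyp : IsGromovHyperbolic X) (o : X)
    (Γ : Subgroup (X ≃ᵢ X)) (hΓ : IsUniformLattice Γ) :
    ∃ k₀ R₀ : ℝ, 0 < k₀ ∧ 0 < R₀ ∧ ∀ k ≥ k₀, ∀ R ≥ R₀, ∃ p : ℕ, ∀ r : ℝ, 0 < r →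
      (∀ ξ : GromovBoundary X, ∃ γ : Γ,
        (r ≤ dist ((γ : X ≃ᵢ X) o) o ∧ dist ((γ : X ≃ᵢ X) o) o ≤ r + k) ∧
          ξ ∈ boundaryShadow R o ((γ : X ≃ᵢ X) o)) ∧
      (∀ ξ : GromovBoundary X,
        ({γ : Γ | (r ≤ dist ((γ : X ≃ᵢ X) o) o ∧ dist ((γ : X ≃ᵢ X) o) o ≤ r + k) ∧
            ξ ∈ boundaryShadow R o ((γ : X ≃ᵢ X) o)}).Finite ∧
        ({γ : Γ | (r ≤ dist ((γ : X ≃ᵢ X) o) o ∧ dist ((γ : X ≃ᵢ X) o) o ≤ r + k) ∧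
            ξ ∈ boundaryShadow R o ((γ : X ≃ᵢ X) o)}).ncard ≤ p) := by
  obtain ⟨δ, -, hX⟩ : ∃ δ, 0 ≤ δ ∧ IsGromovHyperbolicWith X δ := hhyp
  obtain ⟨hdisc, hcocompact⟩ := hΓ
  obtain ⟨D, hD0, hD⟩ := hcocompact.exists_dist_apply_le o
  replace hD : ∀ x : X, ∃ γ : Γ, dist ((γ : X ≃ᵢ X) o) x ≤ D := fun x =>
    let ⟨g, hg, hgx⟩ := hD x; ⟨⟨g, hg⟩, hgx⟩
  refine ⟨2 * D + 1, 4 * δ + D + 1, by linarith, by linarith [hX.nonneg o], fun k hk R hR =>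
    ⟨{γ : Γ | dist ((γ : X ≃ᵢ X) o) o ≤ k + 3 * R + D}.ncard, fun r hr =>
      ⟨fun ξ => ?_, fun ξ => ?_⟩⟩⟩
  · obtain ⟨f, hf0, rfl⟩ := hX.exists_ray_mk_eq hgeo o ξ
    obtain ⟨γ, hγ⟩ := hD (f.1 (r + D))
    have hf := f.dist_apply_of_apply_zero hf0 (by linarith : 0 ≤ r + D)
    refine ⟨γ, ⟨?_, ?_⟩, hX.mem_boundaryShadow hf0 (t := r + D) (by linarith)
      (by linarith [dist_comm (f.1 (r + D)) ((γ : X ≃ᵢ X) o)])⟩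
    · linarith [dist_triangle_left (f.1 (r + D)) o ((γ : X ≃ᵢ X) o)]
    · linarith [dist_triangle ((γ : X ≃ᵢ X) o) (f.1 (r + D)) o]
  · obtain ⟨f, hf0, rfl⟩ := hX.exists_ray_mk_eq hgeo o ξ
    have hsub : {γ : Γ | (r ≤ dist ((γ : X ≃ᵢ X) o) o ∧ dist ((γ : X ≃ᵢ X) o) o ≤ r + k) ∧
        GromovBoundary.mk f ∈ boundaryShadow R o ((γ : X ≃ᵢ X) o)} ⊆
        {γ : Γ | dist ((γ : X ≃ᵢ X) o) (f.1 (max (r - R) 0)) ≤ k + 3 * R} :=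
      fun γ hγ => dist_le_of_mem_boundaryShadow hf0 hγ.1 hγ.2
    have hfin := finite_setOf_dist_apply_le (Γ := Γ) o (f.1 (max (r - R) 0)) (k + 3 * R)
    exact ⟨hfin.subset hsub, (Set.ncard_le_ncard hsub hfin).trans
      (ncard_setOf_dist_apply_le_le hD _ _)⟩

end
end

section
/- Let X be a standard Borel space, M a compact metrizable space, and f_n : X → M a sequence of Borel maps. Then there is a Borel map p : X → M such that for every x ∈ X the point p(x) is an accumulation point in M of the sequence (f_n(x))_{n∈ℕ}. -/
/-!
Fix a compatible metric on `M` and a dense sequence `u`. For each `x` choose centres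
`c k = u (i k)` such that `f n x ∈ ball (c k) 2⁻ᵏ ∩ ball (c (k + 1)) 2⁻ᵏ⁻¹` for infinitely many `n`,
taking for `i (k + 1)` the least admissible index: one exists because finitely many balls of
radius `2⁻ᵏ⁻¹` cover `M`. Consecutive centres are then `2¹⁻ᵏ`-close, and their limit is an
accumulation point of `(f n x)`. Each `i (k + 1)` is the least index satisfying a Borel condition
on `x` and on `i k`, which ranges over the countable set `ℕ`; so all `i k`, and hence the limit,
are Borel in `x`.
-/

open MeasureTheory Filter Topology Metric Set

section Measurability

variable {X : Type*} [MeasurableSpace X]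

theorem measurableSet_setOf_frequently_mem {M : Type*} [MeasurableSpace M] {f : ℕ → X → M}
    (hf : ∀ n, Measurable (f n)) {A : Set M} (hA : MeasurableSet A) :
    MeasurableSet {x | ∃ᶠ n in atTop, f n x ∈ A} := by
  have : {x | ∃ᶠ n in atTop, f n x ∈ A} = limsup (fun n => f n ⁻¹' A) atTop := by
    ext x
    rw [mem_limsup_iff_frequently_mem]
    rfl
  exact this ▸ MeasurableSet.measurableSet_limsup fun n => hf n hA

theorem measurable_nat_sInf_setOf {p : X → ℕ → Prop}
    (hp : ∀ i, MeasurableSet {x | p x i}) :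
    Measurable fun x => sInf {i | p x i} := by
  classical
  have hex : ∀ x, ∃ i, p x i ∨ ∀ j, ¬p x j := fun x => by
    by_cases h : ∃ i, p x i
    · exact h.imp fun _ => Or.inl
    · exact ⟨0, Or.inr (not_exists.1 h)⟩
  have heq : (fun x => sInf {i | p x i}) = fun x => Nat.find (hex x) := by
    funext x
    rw [eq_comm, Nat.find_eq_iff]
    by_cases h : ∃ i, p x i
    · exact ⟨Or.inl (Nat.sInf_mem h), fun n hn hpn =>
        hpn.elim (Nat.notMem_of_lt_sInf hn) fun hall => hall _ (Nat.sInf_mem h)⟩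
    · have hempty : {i | p x i} = ∅ := eq_empty_of_forall_notMem fun i hi => h ⟨i, hi⟩
      simp only [hempty, Nat.sInf_empty]
      exact ⟨Or.inr (not_exists.1 h), fun n hn => absurd hn n.not_lt_zero⟩
  have hnone : {x | ∀ j, ¬p x j} = ⋂ j, {x | p x j}ᶜ := by
    ext x
    simp only [mem_ofPred_eq, mem_iInter, mem_compl_iff]
  rw [heq]
  exact measurable_find hex fun i => (hp i).union
    (show MeasurableSet {x | ∀ j, ¬p x j} from hnone ▸ .iInter fun j => (hp j).compl)

end Measurability

theorem exists_frequently_mem_inter_of_iUnion_eq_univ {M ι α : Type*} [TopologicalSpace M]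
    [CompactSpace M] {U : ι → Set M} (hU : ∀ i, IsOpen (U i)) (hcover : ⋃ i, U i = univ)
    {l : Filter α} {g : α → M} {S : Set M} (hS : ∃ᶠ a in l, g a ∈ S) :
    ∃ i, ∃ᶠ a in l, g a ∈ S ∩ U i := by
  obtain ⟨t, ht⟩ := isCompact_univ.elim_finite_subcover U hU hcover.ge
  have : ∃ᶠ a in l, ∃ i ∈ t, g a ∈ S ∩ U i :=
    hS.mono fun a ha => by
      obtain ⟨i, hi, hai⟩ := mem_iUnion₂.1 (ht (mem_univ (g a)))
      exact ⟨i, hi, ha, hai⟩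
  obtain ⟨i, -, hi⟩ := t.frequently_exists.1 this
  exact ⟨i, hi⟩

theorem mapClusterPt_of_frequently_mem_ball {M α : Type*} [PseudoMetricSpace M] {l : Filter α}
    {g : α → M} {c : ℕ → M} {r : ℕ → ℝ} {p : M} (hc : Tendsto c atTop (𝓝 p))
    (hr : Tendsto r atTop (𝓝 0)) (h : ∀ k, ∃ᶠ a in l, g a ∈ ball (c k) (r k)) :
    MapClusterPt p l g := by
  rw [nhds_basis_ball.mapClusterPt_iff_frequently]
  intro ε hε
  obtain ⟨k, hck, hrk⟩ := (Metric.tendsto_nhds.1 hc (ε / 2) (half_pos hε)).and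
    (hr.eventually_lt_const (half_pos hε)) |>.exists
  refine (h k).mono fun a ha => ?_
  calc dist (g a) p ≤ dist (g a) (c k) + dist (c k) p := dist_triangle _ _ _
    _ < ε := by linarith [mem_ball.1 ha]

namespace ClusterPtSelection

variable {M : Type*} [PseudoMetricSpace M] (u : ℕ → M)

noncomputable def nextCenterIdx (g : ℕ → M) (S : Set M) (ε : ℝ) : ℕ :=
  sInf {i | ∃ᶠ n in atTop, g n ∈ S ∩ ball (u i) ε}

noncomputable def centerIdx (g : ℕ → M) : ℕ → ℕ
  | 0 => nextCenterIdx u g univ 1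
  | k + 1 => nextCenterIdx u g (ball (u (centerIdx g k)) ((1 / 2) ^ k)) ((1 / 2) ^ (k + 1))

noncomputable def selectedPt [Nonempty M] (g : ℕ → M) : M :=
  limUnder atTop fun k => u (centerIdx u g k)

section Convergence

variable {u} [CompactSpace M] (hu : DenseRange u) {g : ℕ → M}
include hu

theorem frequently_mem_inter_ball_nextCenterIdx {S : Set M} (hS : ∃ᶠ n in atTop, g n ∈ S)
    {ε : ℝ} (hε : 0 < ε) :
    ∃ᶠ n in atTop, g n ∈ S ∩ ball (u (nextCenterIdx u g S ε)) ε :=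
  Nat.sInf_mem <| exists_frequently_mem_inter_of_iUnion_eq_univ (fun _ => isOpen_ball)
    (iUnion_eq_univ_iff.2 fun m => (hu.exists_dist_lt m hε).imp fun _ h => mem_ball.2 h) hS

theorem frequently_mem_ball_centerIdx (k : ℕ) :
    ∃ᶠ n in atTop, g n ∈ ball (u (centerIdx u g k)) ((1 / 2) ^ k) := by
  induction k with
  | zero =>
    simpa [centerIdx] using
      frequently_mem_inter_ball_nextCenterIdx hu (g := g) (.of_forall fun _ => mem_univ _) one_pos
  | succ k ih =>
    exact (frequently_mem_inter_ball_nextCenterIdx hu ih (by positivity)).mono fun _ h => h.2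

theorem dist_centerIdx_succ_le (k : ℕ) :
    dist (u (centerIdx u g k)) (u (centerIdx u g (k + 1))) ≤ 2 * (1 / 2) ^ k := by
  obtain ⟨n, hn₁, hn₂⟩ := (frequently_mem_inter_ball_nextCenterIdx hu
    (frequently_mem_ball_centerIdx hu k) (ε := (1 / 2) ^ (k + 1)) (by positivity)).exists
  calc dist (u (centerIdx u g k)) (u (centerIdx u g (k + 1)))
      ≤ dist (g n) (u (centerIdx u g k)) + dist (g n) (u (centerIdx u g (k + 1))) :=
        dist_triangle_left _ _ _
    _ ≤ (1 / 2) ^ k + (1 / 2) ^ (k + 1) := add_le_add (mem_ball.1 hn₁).le (mem_ball.1 hn₂).le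
    _ ≤ 2 * (1 / 2) ^ k := by rw [pow_succ]; linarith [pow_pos (one_half_pos (α := ℝ)) k]

theorem tendsto_selectedPt [Nonempty M] :
    Tendsto (fun k => u (centerIdx u g k)) atTop (𝓝 (selectedPt u g)) :=
  (cauchySeq_of_le_geometric (1 / 2) 2 (by norm_num) (dist_centerIdx_succ_le hu)).tendsto_limUnder

theorem mapClusterPt_selectedPt [Nonempty M] : MapClusterPt (selectedPt u g) atTop g :=
  mapClusterPt_of_frequently_mem_ball (tendsto_selectedPt hu)
    (tendsto_pow_atTop_nhds_zero_of_lt_one (by norm_num) (by norm_num))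
    (frequently_mem_ball_centerIdx hu)

end Convergence

variable {u} {X : Type*} [MeasurableSpace X] [MeasurableSpace M] [OpensMeasurableSpace M]
  {f : ℕ → X → M} (hf : ∀ n, Measurable (f n))
include hf

theorem measurable_nextCenterIdx {S : Set M} (hS : MeasurableSet S) (ε : ℝ) :
    Measurable fun x => nextCenterIdx u (fun n => f n x) S ε :=
  measurable_nat_sInf_setOf fun _ =>
    measurableSet_setOf_frequently_mem hf (hS.inter measurableSet_ball)

theorem measurable_centerIdx (k : ℕ) : Measurable fun x => centerIdx u (fun n => f n x) k := by
  induction k with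
  | zero => exact measurable_nextCenterIdx hf MeasurableSet.univ 1
  | succ k ih =>
    have step : Measurable fun q : X × ℕ =>
        nextCenterIdx u (fun n => f n q.1) (ball (u q.2) ((1 / 2) ^ k)) ((1 / 2) ^ (k + 1)) :=
      measurable_from_prod_countable_left fun j =>
        measurable_nextCenterIdx hf (measurableSet_ball (x := u j) (ε := (1 / 2) ^ k)) _
    simpa only [centerIdx, Function.comp_def, id] using step.comp (measurable_id.prodMk ih)

theorem measurable_selectedPt [CompactSpace M] [Nonempty M] [BorelSpace M] (hu : DenseRange u) :
    Measurable fun x => selectedPt u fun n => f n x :=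
  measurable_of_tendsto_metrizable (fun k => measurable_from_top.comp (measurable_centerIdx hf k))
    (tendsto_pi_nhds.2 fun _ => tendsto_selectedPt hu)

end ClusterPtSelection

theorem measurable_selection_of_accumulation_points_general
    {X : Type*} [MeasurableSpace X]
    {M : Type*} [TopologicalSpace M] [CompactSpace M] [TopologicalSpace.MetrizableSpace M]
    [MeasurableSpace M] [BorelSpace M]
    (f : ℕ → X → M) (hf : ∀ n, Measurable (f n)) :
    ∃ p : X → M, Measurable p ∧ ∀ x : X, MapClusterPt (p x) atTop (fun n => f n x) := by
  rcases isEmpty_or_nonempty X with _ | ⟨⟨x₀⟩⟩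
  · exact ⟨f 0, hf 0, isEmptyElim⟩
  have : Nonempty M := ⟨f 0 x₀⟩
  let := TopologicalSpace.metrizableSpaceMetric M
  obtain ⟨u, hu⟩ := TopologicalSpace.exists_dense_seq M
  exact ⟨_, ClusterPtSelection.measurable_selectedPt hf hu,
    fun x => ClusterPtSelection.mapClusterPt_selectedPt hu⟩

/-- Let `X` be a standard Borel space, `M` a compact metrizable space and
`f_n : X → M` a sequence of Borel maps.  Then there is a Borel map `p : X → M` such that
`p x` is an accumulation point of the sequence `(f n x)` for every `x`. -/
theorem measurable_selection_of_accumulation_points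
    {X : Type*} [MeasurableSpace X] [StandardBorelSpace X]
    {M : Type*} [TopologicalSpace M] [CompactSpace M] [TopologicalSpace.MetrizableSpace M]
    [MeasurableSpace M] [BorelSpace M]
    (f : ℕ → X → M) (hf : ∀ n, Measurable (f n)) :
    ∃ p : X → M, Measurable p ∧ ∀ x : X, MapClusterPt (p x) atTop (fun n => f n x) :=
  measurable_selection_of_accumulation_points_general f hf
end
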